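/- Let y be a random vector in ℝ^D with second moment matrix Σ = E[yy^⊤] ≠ 0 which is almost surely nonzero, let ŷ = y/‖y‖₂ and Σ̂ = E[ŷŷ^⊤], let r = tr(Σ)/‖Σ‖ and r̂ = 1/‖Σ̂‖. Then for any ε ∈ (0,1), ‖Σ̂‖ ≤ 1/(ε·r) + p(ε), where p(ε) = P{‖y‖₂² < ε·E‖y‖₂²}; consequently r̂ ≥ r/(ε^{−1} + r·p(ε)). -/

import Mathlib

open MeasureTheory ProbabilityTheory

noncomputable section

/-- Squared Euclidean norm of a vector. -/
def sqNorm {ι : Type*} [Fintype ι] (x : ι → ℝ) : ℝ := ∑ i, (x i) ^ 2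

/-- Euclidean norm of a vector. -/
def eNorm {ι : Type*} [Fintype ι] (x : ι → ℝ) : ℝ := Real.sqrt (sqNorm x)

/-- Unit normalization of a vector (junk value `0` when `x = 0`). -/
def unit {ι : Type*} [Fintype ι] (x : ι → ℝ) : ι → ℝ := (eNorm x)⁻¹ • x

/-- Squared Frobenius norm of a matrix. -/
def frobSq {α β : Type*} [Fintype α] [Fintype β] (A : Matrix α β ℝ) : ℝ :=
  ∑ i, ∑ j, (A i j) ^ 2

/-- The ℓ²→ℓ² operator norm of a matrix. -/
def opNorm {α β : Type*} [Fintype α] [Fintype β] (A : Matrix α β ℝ) : ℝ :=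
  sSup {c : ℝ | ∃ x : β → ℝ, eNorm x ≤ 1 ∧ c = eNorm (A.mulVec x)}

/-- The ∞-stable rank `‖A‖_F² / ‖A‖²`. -/
def rInf {α β : Type*} [Fintype α] [Fintype β] (A : Matrix α β ℝ) : ℝ :=
  frobSq A / (opNorm A) ^ 2

/-- The 4-stable rank `‖A‖_F⁴ / ‖AAᵀ‖_F²`. -/
def r4 {α β : Type*} [Fintype α] [Fintype β] (A : Matrix α β ℝ) : ℝ :=
  (frobSq A) ^ 2 / frobSq (A * A.transpose)

/-- The sub-gaussian (ψ₂) norm of a real random variable. -/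
def psi2 {Ω : Type*} [MeasurableSpace Ω] (μ : Measure Ω) (f : Ω → ℝ) : ℝ :=
  sInf {t : ℝ | 0 < t ∧ ∫ ω, Real.exp (f ω ^ 2 / t ^ 2) ∂μ ≤ 2}

/-- The entries of the random matrix `Z` are i.i.d. -/
def IIDEntries {Ω : Type*} [MeasurableSpace Ω] (μ : Measure Ω) {k D : ℕ}
    (Z : Ω → Matrix (Fin k) (Fin D) ℝ) : Prop :=
  (∀ p : Fin k × Fin D, Measurable fun ω => Z ω p.1 p.2) ∧
  iIndepFun (fun (p : Fin k × Fin D) ω => Z ω p.1 p.2) μ ∧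
  ∀ p q : Fin k × Fin D,
    IdentDistrib (fun ω => Z ω p.1 p.2) (fun ω => Z ω q.1 q.2) μ μ

/-- The entries of the random matrix `Z` are i.i.d., mean-zero, unit-variance
and sub-gaussian. -/
def GoodEntries {Ω : Type*} [MeasurableSpace Ω] (μ : Measure Ω) {k D : ℕ}
    (Z : Ω → Matrix (Fin k) (Fin D) ℝ) : Prop :=
  IIDEntries μ Z ∧
  (∀ i j, ∫ ω, Z ω i j ∂μ = 0) ∧
  (∀ i j, ∫ ω, (Z ω i j) ^ 2 ∂μ = 1) ∧
  (∀ i j, ∃ t : ℝ, 0 < t ∧ ∫ ω, Real.exp ((Z ω i j) ^ 2 / t ^ 2) ∂μ ≤ 2)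

/-- The two-sided Johnson–Lindenstrauss inequality for the pair `u, v`,
with tolerance `ε` and normalization `√(γ/k)`. -/
def JLPair {k D : ℕ} (ε γ : ℝ) (Z : Matrix (Fin k) (Fin D) ℝ) (u v : Fin D → ℝ) : Prop :=
  (1 - ε) * eNorm (u - v) ≤ Real.sqrt (γ / k) * eNorm (Z.mulVec (u - v)) ∧
  Real.sqrt (γ / k) * eNorm (Z.mulVec (u - v)) ≤ (1 + ε) * eNorm (u - v)

/-! Split on the event `‖y‖² < ε E‖y‖²`. Off it, `⟨x, ŷ⟩² ≤ ⟨x, y⟩² / (ε E‖y‖²)`, whose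
expectation is at most `‖Σ‖ / (ε tr Σ) = 1 / (ε r)` for `‖x‖ ≤ 1`; on it, `⟨x, ŷ⟩² ≤ 1`.
So the quadratic form of `Σ̂` is at most `1 / (ε r) + p(ε)` on the unit ball, and so is `‖Σ̂‖`,
because `E[⟨z, ŷ⟩⟨x, ŷ⟩] ≤ (E⟨z, ŷ⟩² + E⟨x, ŷ⟩²) / 2`. Inverting gives the bound on `r̂`;
`‖Σ̂‖ > 0` because `tr Σ̂ = 1`. -/

open Matrix

section Vectors

variable {ι : Type*} [Fintype ι]

lemma sqNorm_nonneg (x : ι → ℝ) : 0 ≤ sqNorm x :=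
  Finset.sum_nonneg fun i _ => sq_nonneg (x i)

lemma sqNorm_eq_dotProduct (x : ι → ℝ) : sqNorm x = x ⬝ᵥ x := by
  simp only [sqNorm, dotProduct, sq]

lemma sqNorm_eq_zero_iff {x : ι → ℝ} : sqNorm x = 0 ↔ x = 0 := by
  rw [sqNorm_eq_dotProduct, dotProduct_self_eq_zero]

lemma eNorm_sq (x : ι → ℝ) : eNorm x ^ 2 = sqNorm x :=
  Real.sq_sqrt (sqNorm_nonneg x)

lemma eNorm_le_one_iff {x : ι → ℝ} : eNorm x ≤ 1 ↔ sqNorm x ≤ 1 :=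
  Real.sqrt_le_one

lemma sq_dotProduct_le (x v : ι → ℝ) : (x ⬝ᵥ v) ^ 2 ≤ sqNorm x * sqNorm v :=
  Finset.sum_mul_sq_le_sq_mul_sq _ x v

lemma dotProduct_le_eNorm_mul_eNorm (x v : ι → ℝ) : x ⬝ᵥ v ≤ eNorm x * eNorm v := by
  rw [eNorm, eNorm, ← Real.sqrt_mul (sqNorm_nonneg x)]
  exact (le_abs_self _).trans (Real.abs_le_sqrt (sq_dotProduct_le x v))

lemma dotProduct_unit (x v : ι → ℝ) : x ⬝ᵥ unit v = (eNorm v)⁻¹ * (x ⬝ᵥ v) :=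
  dotProduct_smul _ x v

lemma unit_dotProduct_self (v : ι → ℝ) : unit v ⬝ᵥ v = eNorm v := by
  rw [dotProduct_comm, dotProduct_unit, ← sqNorm_eq_dotProduct, ← eNorm_sq]
  rcases eq_or_ne (eNorm v) 0 with h | h
  · simp [h]
  · field_simp

lemma sq_dotProduct_unit (x v : ι → ℝ) : (x ⬝ᵥ unit v) ^ 2 = (x ⬝ᵥ v) ^ 2 / sqNorm v := by
  rw [dotProduct_unit, mul_pow, inv_pow, eNorm_sq, inv_mul_eq_div]

lemma eNorm_ne_zero {v : ι → ℝ} (hv : v ≠ 0) : eNorm v ≠ 0 := fun h =>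
  hv (sqNorm_eq_zero_iff.mp (by rw [← eNorm_sq, h, sq, zero_mul]))

lemma sqNorm_unit {v : ι → ℝ} (hv : v ≠ 0) : sqNorm (unit v) = 1 := by
  rw [sqNorm_eq_dotProduct, dotProduct_unit, unit_dotProduct_self,
    inv_mul_cancel₀ (eNorm_ne_zero hv)]

lemma sqNorm_unit_le (v : ι → ℝ) : sqNorm (unit v) ≤ 1 := by
  rcases eq_or_ne v 0 with rfl | hv
  · simp [unit, sqNorm]
  · exact (sqNorm_unit hv).le

lemma eNorm_unit_le (v : ι → ℝ) : eNorm (unit v) ≤ 1 :=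
  eNorm_le_one_iff.mpr (sqNorm_unit_le v)

lemma sq_dotProduct_unit_le_one {x : ι → ℝ} (hx : sqNorm x ≤ 1) (v : ι → ℝ) :
    (x ⬝ᵥ unit v) ^ 2 ≤ 1 :=
  (sq_dotProduct_le x (unit v)).trans
    (mul_le_one₀ hx (sqNorm_nonneg _) (sqNorm_unit_le v))

lemma sq_dotProduct_unit_le_of_le (x : ι → ℝ) {v : ι → ℝ} {t : ℝ} (ht : 0 < t)
    (hv : t ≤ sqNorm v) : (x ⬝ᵥ unit v) ^ 2 ≤ (x ⬝ᵥ v) ^ 2 / t := by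
  rw [sq_dotProduct_unit]
  exact div_le_div_of_nonneg_left (sq_nonneg _) ht hv

end Vectors

section OpNorm

variable {α β : Type*} [Fintype α] [Fintype β]

lemma sqNorm_mulVec_le (A : Matrix α β ℝ) (x : β → ℝ) :
    sqNorm (A *ᵥ x) ≤ frobSq A * sqNorm x := by
  rw [frobSq, Finset.sum_mul]
  exact Finset.sum_le_sum fun i _ => sq_dotProduct_le (A i) x

lemma dotProduct_mulVec_eq_sum (a : α → ℝ) (M : Matrix α β ℝ) (b : β → ℝ) :
    a ⬝ᵥ M *ᵥ b = ∑ i, ∑ j, a i * b j * M i j := by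
  simp only [dotProduct, mulVec, Finset.mul_sum]
  exact Finset.sum_congr rfl fun i _ => Finset.sum_congr rfl fun j _ => by ring

lemma bddAbove_opNorm_set (A : Matrix α β ℝ) :
    BddAbove {c : ℝ | ∃ x : β → ℝ, eNorm x ≤ 1 ∧ c = eNorm (A *ᵥ x)} := by
  refine ⟨Real.sqrt (frobSq A), ?_⟩
  rintro c ⟨x, hx, rfl⟩
  refine Real.sqrt_le_sqrt ((sqNorm_mulVec_le A x).trans ?_)
  exact mul_le_of_le_one_right (Finset.sum_nonneg fun i _ => sqNorm_nonneg (A i))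
    (eNorm_le_one_iff.mp hx)

lemma eNorm_mulVec_le_opNorm (A : Matrix α β ℝ) {x : β → ℝ} (hx : eNorm x ≤ 1) :
    eNorm (A *ᵥ x) ≤ opNorm A :=
  le_csSup (bddAbove_opNorm_set A) ⟨x, hx, rfl⟩

lemma opNorm_le_of_eNorm_mulVec_le (A : Matrix α β ℝ) {c : ℝ}
    (h : ∀ x : β → ℝ, eNorm x ≤ 1 → eNorm (A *ᵥ x) ≤ c) : opNorm A ≤ c := by
  refine csSup_le ⟨_, 0, by simp [eNorm, sqNorm], rfl⟩ ?_
  rintro b ⟨x, hx, rfl⟩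
  exact h x hx

lemma dotProduct_mulVec_le_opNorm (A : Matrix α β ℝ) {x : β → ℝ} {z : α → ℝ}
    (hx : eNorm x ≤ 1) (hz : eNorm z ≤ 1) : z ⬝ᵥ A *ᵥ x ≤ opNorm A :=
  calc z ⬝ᵥ A *ᵥ x ≤ eNorm z * eNorm (A *ᵥ x) := dotProduct_le_eNorm_mul_eNorm z _
    _ ≤ eNorm (A *ᵥ x) := mul_le_of_le_one_left (Real.sqrt_nonneg _) hz
    _ ≤ opNorm A := eNorm_mulVec_le_opNorm A hx

lemma opNorm_le_of_dotProduct_mulVec_le {A : Matrix α β ℝ} {c : ℝ}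
    (h : ∀ x z, eNorm x ≤ 1 → eNorm z ≤ 1 → z ⬝ᵥ A *ᵥ x ≤ c) : opNorm A ≤ c :=
  opNorm_le_of_eNorm_mulVec_le A fun x hx =>
    unit_dotProduct_self (A *ᵥ x) ▸ h x _ hx (eNorm_unit_le _)

lemma eNorm_single [DecidableEq α] (i : α) (s : ℝ) : eNorm (Pi.single i s) = |s| := by
  rw [eNorm, ← Real.sqrt_sq_eq_abs]
  congr 1
  simp [sqNorm, Pi.single_apply]

lemma abs_le_opNorm (A : Matrix α β ℝ) (i : α) (j : β) : |A i j| ≤ opNorm A := by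
  classical
  have key : ∀ s : ℝ, |s| = 1 → s * A i j ≤ opNorm A := fun s hs => by
    simpa using dotProduct_mulVec_le_opNorm A (x := Pi.single j 1) (z := Pi.single i s)
      (by simp [eNorm_single]) (by simp [eNorm_single, hs])
  exact abs_le'.mpr ⟨by simpa using key 1 (by simp), by simpa using key (-1) (by simp)⟩

lemma opNorm_pos {A : Matrix α β ℝ} (hA : A ≠ 0) : 0 < opNorm A := by
  obtain ⟨i, j, hij⟩ : ∃ i j, A i j ≠ 0 := by
    by_contra! h
    exact hA (Matrix.ext h)
  exact (abs_pos.mpr hij).trans_le (abs_le_opNorm A i j)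

end OpNorm

section SecondMoment

variable {Ω : Type*} [MeasurableSpace Ω] {μ : Measure Ω} {ι : Type*} [Fintype ι]
  {v : Ω → ι → ℝ}

def secondMoment (μ : Measure Ω) (v : Ω → ι → ℝ) : Matrix ι ι ℝ :=
  Matrix.of fun i j => ∫ ω, v ω i * v ω j ∂μ

lemma dotProduct_mul_dotProduct (a b w : ι → ℝ) :
    (a ⬝ᵥ w) * (b ⬝ᵥ w) = ∑ i, ∑ j, a i * b j * (w i * w j) := by
  simp only [dotProduct, Finset.sum_mul_sum]
  exact Finset.sum_congr rfl fun i _ => Finset.sum_congr rfl fun j _ => by ring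

lemma integrable_dotProduct_mul_dotProduct
    (hint : ∀ i j, Integrable (fun ω => v ω i * v ω j) μ) (a b : ι → ℝ) :
    Integrable (fun ω => (a ⬝ᵥ v ω) * (b ⬝ᵥ v ω)) μ := by
  simp only [dotProduct_mul_dotProduct]
  exact integrable_finsetSum _ fun i _ => integrable_finsetSum _ fun j _ =>
    (hint i j).const_mul _

lemma integrable_sq_dotProduct
    (hint : ∀ i j, Integrable (fun ω => v ω i * v ω j) μ) (a : ι → ℝ) :
    Integrable (fun ω => (a ⬝ᵥ v ω) ^ 2) μ := by
  simpa only [sq] using integrable_dotProduct_mul_dotProduct hint a a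

lemma dotProduct_secondMoment_mulVec
    (hint : ∀ i j, Integrable (fun ω => v ω i * v ω j) μ) (a b : ι → ℝ) :
    a ⬝ᵥ secondMoment μ v *ᵥ b = ∫ ω, (a ⬝ᵥ v ω) * (b ⬝ᵥ v ω) ∂μ := by
  have hint' : ∀ i j, Integrable (fun ω => a i * b j * (v ω i * v ω j)) μ :=
    fun i j => (hint i j).const_mul _
  simp only [dotProduct_mulVec_eq_sum, dotProduct_mul_dotProduct, secondMoment, of_apply,
    ← integral_const_mul]
  rw [integral_finsetSum _ fun i _ => integrable_finsetSum _ fun j _ => hint' i j]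
  exact Finset.sum_congr rfl fun i _ => (integral_finsetSum _ fun j _ => hint' i j).symm

lemma trace_secondMoment (hint : ∀ i j, Integrable (fun ω => v ω i * v ω j) μ) :
    (secondMoment μ v).trace = ∫ ω, sqNorm (v ω) ∂μ := by
  simp only [trace, diag, secondMoment, of_apply, sqNorm, sq]
  rw [integral_finsetSum _ fun i _ => hint i i]

lemma trace_secondMoment_pos [NeZero μ] (hint : ∀ i j, Integrable (fun ω => v ω i * v ω j) μ)
    (hne : ∀ᵐ ω ∂μ, v ω ≠ 0) : 0 < (secondMoment μ v).trace := by
  have hint_sqNorm : Integrable (fun ω => sqNorm (v ω)) μ := by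
    simpa only [sqNorm, sq] using integrable_finsetSum _ fun i _ => hint i i
  rw [trace_secondMoment hint]
  refine (integral_nonneg fun ω => sqNorm_nonneg _).lt_of_ne fun h => ?_
  have hzero := (integral_eq_zero_iff_of_nonneg (fun ω => sqNorm_nonneg _) hint_sqNorm).mp h.symm
  obtain ⟨ω, hω, hω0⟩ := (hne.and hzero).exists
  exact hω (sqNorm_eq_zero_iff.mp hω0)

lemma Measurable.unit (hv : Measurable v) : Measurable fun ω => unit (v ω) := by
  unfold _root_.unit eNorm sqNorm
  fun_prop

lemma integrable_unit_mul_unit [IsFiniteMeasure μ] (hv : Measurable v) (i j : ι) :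
    Integrable (fun ω => unit (v ω) i * unit (v ω) j) μ := by
  refine .of_bound (((measurable_pi_apply i).comp hv.unit).mul
    ((measurable_pi_apply j).comp hv.unit)).aestronglyMeasurable 1 (.of_forall fun ω => ?_)
  have habs : ∀ k, |unit (v ω) k| ≤ 1 := fun k => (sq_le_one_iff_abs_le_one _).mp <|
    (Finset.single_le_sum (fun l _ => sq_nonneg (unit (v ω) l)) (Finset.mem_univ k)).trans
      (sqNorm_unit_le (v ω))
  rw [Real.norm_eq_abs, abs_mul]
  exact mul_le_one₀ (habs i) (abs_nonneg _) (habs j)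

lemma trace_secondMoment_unit [IsProbabilityMeasure μ] (hv : Measurable v)
    (hne : ∀ᵐ ω ∂μ, v ω ≠ 0) : (secondMoment μ fun ω => unit (v ω)).trace = 1 := by
  rw [trace_secondMoment (integrable_unit_mul_unit hv),
    integral_congr_ae (hne.mono fun ω hω => sqNorm_unit hω)]
  simp

lemma integral_sq_dotProduct_unit_le [IsFiniteMeasure μ] (hv : Measurable v)
    (hint : ∀ i j, Integrable (fun ω => v ω i * v ω j) μ) {t : ℝ} (ht : 0 < t)
    {x : ι → ℝ} (hx : eNorm x ≤ 1) :
    ∫ ω, (x ⬝ᵥ unit (v ω)) ^ 2 ∂μ ≤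
      opNorm (secondMoment μ v) / t + (μ {ω | sqNorm (v ω) < t}).toReal := by
  set S := {ω | sqNorm (v ω) < t}
  have hS : MeasurableSet S := measurableSet_lt (by unfold sqNorm; fun_prop) measurable_const
  have hind : Integrable (S.indicator (1 : Ω → ℝ)) μ := (integrable_const 1).indicator hS
  have hpt : ∀ ω, (x ⬝ᵥ unit (v ω)) ^ 2 ≤ (x ⬝ᵥ v ω) ^ 2 / t + S.indicator 1 ω := by
    intro ω
    by_cases hω : ω ∈ S
    · rw [Set.indicator_of_mem hω, Pi.one_apply]
      have := sq_dotProduct_unit_le_one (eNorm_le_one_iff.mp hx) (v ω)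
      have := div_nonneg (sq_nonneg (x ⬝ᵥ v ω)) ht.le
      linarith
    · rw [Set.indicator_of_notMem hω, add_zero]
      exact sq_dotProduct_unit_le_of_le x ht (not_lt.mp hω)
  have hquad : ∫ ω, (x ⬝ᵥ v ω) ^ 2 ∂μ ≤ opNorm (secondMoment μ v) := by
    simp only [sq, ← dotProduct_secondMoment_mulVec hint]
    exact dotProduct_mulVec_le_opNorm _ hx hx
  calc ∫ ω, (x ⬝ᵥ unit (v ω)) ^ 2 ∂μ
      ≤ ∫ ω, ((x ⬝ᵥ v ω) ^ 2 / t + S.indicator 1 ω) ∂μ :=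
        integral_mono (integrable_sq_dotProduct (integrable_unit_mul_unit hv) x)
          (((integrable_sq_dotProduct hint x).div_const t).add hind) hpt
    _ = (∫ ω, (x ⬝ᵥ v ω) ^ 2 ∂μ) / t + (μ S).toReal := by
        rw [integral_add ((integrable_sq_dotProduct hint x).div_const t) hind,
          integral_div, integral_indicator_one hS, measureReal_def]
    _ ≤ opNorm (secondMoment μ v) / t + (μ S).toReal := by gcongr

lemma opNorm_secondMoment_unit_le [IsFiniteMeasure μ] (hv : Measurable v)
    (hint : ∀ i j, Integrable (fun ω => v ω i * v ω j) μ) {t : ℝ} (ht : 0 < t) :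
    opNorm (secondMoment μ fun ω => unit (v ω)) ≤
      opNorm (secondMoment μ v) / t + (μ {ω | sqNorm (v ω) < t}).toReal := by
  set B := opNorm (secondMoment μ v) / t + (μ {ω | sqNorm (v ω) < t}).toReal
  have hint' := integrable_unit_mul_unit (μ := μ) hv
  have hsq := integrable_sq_dotProduct hint'
  refine opNorm_le_of_dotProduct_mulVec_le fun x z hx hz => ?_
  rw [dotProduct_secondMoment_mulVec hint']
  calc ∫ ω, (z ⬝ᵥ unit (v ω)) * (x ⬝ᵥ unit (v ω)) ∂μ
      ≤ ∫ ω, ((z ⬝ᵥ unit (v ω)) ^ 2 + (x ⬝ᵥ unit (v ω)) ^ 2) / 2 ∂μ :=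
        integral_mono (integrable_dotProduct_mul_dotProduct hint' z x)
          (((hsq z).add (hsq x)).div_const 2) fun ω => by
            linarith [two_mul_le_add_sq (z ⬝ᵥ unit (v ω)) (x ⬝ᵥ unit (v ω))]
    _ = ((∫ ω, (z ⬝ᵥ unit (v ω)) ^ 2 ∂μ) + ∫ ω, (x ⬝ᵥ unit (v ω)) ^ 2 ∂μ) / 2 := by
        rw [integral_div, integral_add (hsq z) (hsq x)]
    _ ≤ (B + B) / 2 := by
        gcongr <;> exact integral_sq_dotProduct_unit_le hv hint ht ‹_›
    _ = B := add_self_div_two B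

end SecondMoment

theorem retraction_stable_rank_transfer_general
    {Ω : Type*} [MeasurableSpace Ω] (μ : Measure Ω) [IsProbabilityMeasure μ]
    {D : ℕ} (y : Ω → Fin D → ℝ)
    (hmeas : Measurable y)
    (hne : ∀ᵐ ω ∂μ, y ω ≠ 0)
    (hint : ∀ i j : Fin D, Integrable (fun ω => y ω i * y ω j) μ)
    (Sig : Matrix (Fin D) (Fin D) ℝ)
    (hSig : ∀ i j, Sig i j = ∫ ω, y ω i * y ω j ∂μ)
    (hSigne : Sig ≠ 0)
    (SigHat : Matrix (Fin D) (Fin D) ℝ)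
    (hSigHat : ∀ i j, SigHat i j = ∫ ω, unit (y ω) i * unit (y ω) j ∂μ)
    (r rHat : ℝ)
    (hr : r = (∑ i, Sig i i) / opNorm Sig)
    (hrHat : rHat = 1 / opNorm SigHat)
    (ε : ℝ) (hε0 : 0 < ε) :
    opNorm SigHat ≤ 1 / (ε * r) +
        (μ {ω | sqNorm (y ω) < ε * ∫ ω', sqNorm (y ω') ∂μ}).toReal ∧
    r / (ε⁻¹ + r * (μ {ω | sqNorm (y ω) < ε * ∫ ω', sqNorm (y ω') ∂μ}).toReal) ≤ rHat := by
  obtain rfl : Sig = secondMoment μ y := Matrix.ext hSig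
  obtain rfl : SigHat = secondMoment μ fun ω => unit (y ω) := Matrix.ext hSigHat
  have htrace : ∑ i, secondMoment μ y i i = ∫ ω, sqNorm (y ω) ∂μ := trace_secondMoment hint
  have hT : 0 < ∫ ω, sqNorm (y ω) ∂μ := htrace ▸ trace_secondMoment_pos hint hne
  set T := ∫ ω, sqNorm (y ω) ∂μ
  set p := (μ {ω | sqNorm (y ω) < ε * T}).toReal
  have hSigPos := opNorm_pos hSigne
  have hSigHatPos : 0 < opNorm (secondMoment μ fun ω => unit (y ω)) := opNorm_pos fun h => by
    simpa [h] using trace_secondMoment_unit (μ := μ) hmeas hne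
  have hbound : opNorm (secondMoment μ fun ω => unit (y ω)) ≤ 1 / (ε * r) + p := by
    convert opNorm_secondMoment_unit_le hmeas hint (mul_pos hε0 hT) using 2
    rw [hr, htrace]
    field_simp
  refine ⟨hbound, ?_⟩
  have hrpos : 0 < r := hr ▸ htrace ▸ div_pos hT hSigPos
  calc r / (ε⁻¹ + r * p) = 1 / (1 / (ε * r) + p) := by field_simp
    _ ≤ rHat := hrHat ▸ one_div_le_one_div_of_le hSigHatPos hbound

/-- Lemma: stable rank transfer under retraction to the
sphere. Let `y` be an a.s. nonzero random vector in `ℝ^D` with second moment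
matrix `Σ ≠ 0`, let `ŷ = y/‖y‖₂` with `Σ̂ = E[ŷŷᵀ]`, `r = tr Σ/‖Σ‖` and
`r̂ = 1/‖Σ̂‖`. Then for any `ε ∈ (0,1)`,
`‖Σ̂‖ ≤ 1/(εr) + p(ε)` where `p(ε) = P{‖y‖₂² < ε E‖y‖₂²}`; consequently
`r̂ ≥ r/(ε⁻¹ + r p(ε))`. -/
theorem retraction_stable_rank_transfer
    {Ω : Type*} [MeasurableSpace Ω] (μ : Measure Ω) [IsProbabilityMeasure μ]
    {D : ℕ} (y : Ω → Fin D → ℝ)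
    (hmeas : Measurable y)
    (hne : ∀ᵐ ω ∂μ, y ω ≠ 0)
    (hint : ∀ i j : Fin D, Integrable (fun ω => y ω i * y ω j) μ)
    (Sig : Matrix (Fin D) (Fin D) ℝ)
    (hSig : ∀ i j, Sig i j = ∫ ω, y ω i * y ω j ∂μ)
    (hSigne : Sig ≠ 0)
    (SigHat : Matrix (Fin D) (Fin D) ℝ)
    (hSigHat : ∀ i j, SigHat i j = ∫ ω, unit (y ω) i * unit (y ω) j ∂μ)
    (r rHat : ℝ)
    (hr : r = (∑ i, Sig i i) / opNorm Sig)
    (hrHat : rHat = 1 / opNorm SigHat)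
    (ε : ℝ) (hε0 : 0 < ε) (hε1 : ε < 1) :
    opNorm SigHat ≤ 1 / (ε * r) +
        (μ {ω | sqNorm (y ω) < ε * ∫ ω', sqNorm (y ω') ∂μ}).toReal ∧
    r / (ε⁻¹ + r * (μ {ω | sqNorm (y ω) < ε * ∫ ω', sqNorm (y ω') ∂μ}).toReal) ≤ rHat :=
  retraction_stable_rank_transfer_general μ y hmeas hne hint Sig hSig hSigne SigHat hSigHat r rHat
    hr hrHat ε hε0
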